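/- For every word u ∈ S^0 and every integer n ≥ 0, the concatenation u x0^n satisfies u x0^n = Σ_{j=0}^n reg^0(u x0^{n−j}) ⧢ x0^j, and reg^0(u x0^n) = Σ_{j=0}^n (−1)^j (u x0^{n−j}) ⧢ x0^j. -/

import Mathlib

open scoped BigOperators

namespace MZVRH

noncomputable section

/-- A word over the two-letter alphabet: `false` stands for `x0`, `true` for `x1`. -/
abbrev Word : Type := List Bool

/-- The shuffle algebra `S`: the free ℂ-vector space on words. -/
abbrev S : Type := Word →₀ ℂ

/-- The word `w` viewed as an element of `S`. -/
def wordS (w : Word) : S := Finsupp.single w 1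

/-- Shuffle product of two words, as an element of `S`. -/
def shWord : Word → Word → S
  | [], v => Finsupp.single v 1
  | u, [] => Finsupp.single u 1
  | a :: u, b :: v =>
      (shWord u (b :: v)).mapDomain (a :: ·)
        + (shWord (a :: u) v).mapDomain (b :: ·)
  termination_by u v => u.length + v.length
  decreasing_by all_goals simp [List.length_cons]

/-- The bilinear extension of the shuffle product to `S`. -/
def sh (x y : S) : S := x.sum fun u a => y.sum fun v b => (a * b) • shWord u v

/-- The word `x0^j`. -/
def x0pow (j : ℕ) : Word := List.replicate j false

/-- The word `x1^i`. -/
def x1pow (i : ℕ) : Word := List.replicate i true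

/-- A word is empty or ends in `x1`. -/
def EndsInX1 (w : Word) : Prop := w = [] ∨ w.getLast? = some true

/-- A word is empty or begins with `x0` and ends in `x1`. -/
def BeginsEndsX0X1 (w : Word) : Prop :=
  w = [] ∨ (w.head? = some false ∧ w.getLast? = some true)

/-- Membership in the subspace `S^0` spanned by the empty word and words ending in `x1`. -/
def InS0 (x : S) : Prop := ∀ w ∈ x.support, EndsInX1 w

/-- Membership in the subspace `S^{10}` spanned by the empty word and words beginning
with `x0` and ending in `x1`. -/
def InS10 (x : S) : Prop := ∀ w ∈ x.support, BeginsEndsX0X1 w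

/-- `Σ_j w_j ⧢ x0^j` for a finitely supported family `f : ℕ →₀ S`. -/
def decomp0Sum (f : ℕ →₀ S) : S := f.sum fun j w => sh w (wordS (x0pow j))

/-- `Σ_{i,j} x1^i ⧢ w_{ij} ⧢ x0^j` for a finitely supported family `f : ℕ × ℕ →₀ S`. -/
def decomp10Sum (f : ℕ × ℕ →₀ S) : S :=
  f.sum fun p w => sh (wordS (x1pow p.1)) (sh w (wordS (x0pow p.2)))

/-- `f` is a decomposition of `u` with coefficients in `S^0`. -/
def HasDecomp0 (u : S) (f : ℕ →₀ S) : Prop := (∀ j, InS0 (f j)) ∧ u = decomp0Sum f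

/-- `f` is a decomposition of `u` with coefficients in `S^{10}`. -/
def HasDecomp10 (u : S) (f : ℕ × ℕ →₀ S) : Prop :=
  (∀ p, InS10 (f p)) ∧ u = decomp10Sum f

open Classical in
/-- The regularization map `reg^0 : S → S^0`, the constant term of the decomposition
of `u` as a polynomial in `x0` with coefficients in `S^0`. -/
def reg0 (u : S) : S := if h : ∃ f, HasDecomp0 u f then h.choose 0 else 0

open Classical in
/-- The regularization map `reg^{10} : S → S^{10}`, the constant term of the decomposition
of `u` as a polynomial in `x0, x1` with coefficients in `S^{10}`. -/
def reg10 (u : S) : S := if h : ∃ f, HasDecomp10 u f then h.choose (0, 0) else 0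

/-- `τ`: reverse the word and exchange `x0` with `x1`. -/
def tau (w : Word) : Word := (w.map (fun b => !b)).reverse

/-- The composition `(k1, …, kr)` attached to a word `x0^{k1-1} x1 ⋯ x0^{kr-1} x1 ∈ S^0`. -/
def toComp : Word → List ℕ
  | [] => []
  | false :: w =>
      match toComp w with
      | [] => []
      | k :: ks => (k + 1) :: ks
  | true :: w => 1 :: toComp w

/-- Strictly decreasing tuples of positive integers `n1 > n2 > ⋯ > nr > 0`. -/
def Tuples (r : ℕ) : Type := {f : Fin r → ℕ // StrictAnti f ∧ ∀ i, 0 < f i}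

/-- The multiple polylogarithm `Li_{k1,…,kr}(z) = Σ_{n1 > ⋯ > nr > 0} z^{n1}/(n1^{k1} ⋯ nr^{kr})`,
attached to a composition `ks = (k1, …, kr)`; equal to `1` for the empty composition. -/
def LiComp (ks : List ℕ) (z : ℂ) : ℂ :=
  ∑' n : Tuples ks.length,
    (if h : 0 < ks.length then z ^ n.1 ⟨0, h⟩ else 1) /
      ∏ i : Fin ks.length, (n.1 i : ℂ) ^ ks.get i

/-- The multiple zeta value `ζ(k1,…,kr) = Σ_{n1 > ⋯ > nr > 0} 1/(n1^{k1} ⋯ nr^{kr})`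
attached to a composition; equal to `1` for the empty composition. -/
def zetaComp (ks : List ℕ) : ℂ :=
  ∑' n : Tuples ks.length, 1 / ∏ i : Fin ks.length, (n.1 i : ℂ) ^ ks.get i

/-- The ℂ-linear extension of `w ↦ Li(w; z)` to elements of `S` supported on `S^0` words. -/
def LiS0 (x : S) (z : ℂ) : ℂ := x.sum fun w c => c * LiComp (toComp w) z

/-- The ℂ-linear extension of `w ↦ ζ(w)` to elements of `S` supported on `S^{10}` words. -/
def zetaS (x : S) : ℂ := x.sum fun w c => c * zetaComp (toComp w)

open Classical in
/-- The extended multiple polylogarithm on `S`: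
`Li(u; z) = Σ_j Li(w_j; z) (log z)^j / j!` where `u = Σ_j w_j ⧢ x0^j` with `w_j ∈ S^0`. -/
def Li (u : S) (z : ℂ) : ℂ :=
  if h : ∃ f, HasDecomp0 u f then
    h.choose.sum fun j w => LiS0 w z * Complex.log z ^ j / (Nat.factorial j : ℂ)
  else 0

/-- The domain `D0 = ℂ ∖ {x ∈ ℝ : x ≥ 1}`. -/
def D0 : Set ℂ := {z | ¬ (z.im = 0 ∧ 1 ≤ z.re)}

/-- The domain `D1 = ℂ ∖ {x ∈ ℝ : x ≤ 0}`. -/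
def D1 : Set ℂ := {z | ¬ (z.im = 0 ∧ z.re ≤ 0)}

/-- The ℂ-linear extension of a word-indexed family of functions to `S`. -/
def extLin (h : Word → ℂ → ℂ) (x : S) (z : ℂ) : ℂ := x.sum fun w c => c * h w z

/-- A solution of the additive Riemann–Hilbert problem for multiple polylogarithms. -/
def RHSol (h0 h1 : Word → ℂ → ℂ) : Prop :=
  -- (0) shuffle homomorphisms with prescribed value on `x0`
  (∀ z ∈ D0 ∩ D1,
      (h0 [] z = 1 ∧ h1 [] z = 1) ∧
      (∀ u v : Word,
          extLin h0 (sh (wordS u) (wordS v)) z = h0 u z * h0 v z ∧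
          extLin h1 (sh (wordS u) (wordS v)) z = h1 u z * h1 v z) ∧
      h0 [false] z = Complex.log z ∧ h1 [false] z = Complex.log (1 - z)) ∧
  -- (1) holomorphy and the functional equation
  (∀ w : Word,
      DifferentiableOn ℂ (fun z => extLin h0 (reg0 (wordS w)) z) D0 ∧
      DifferentiableOn ℂ (fun z => extLin h1 (reg0 (wordS w)) z) D1 ∧
      ∀ z ∈ D0 ∩ D1,
        ∑ k ∈ Finset.range (w.length + 1),
            h1 (tau (w.take k)) z * h0 (w.drop k) z = zetaS (reg10 (wordS w))) ∧
  -- (2) asymptotic condition at infinity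
  (∀ w : Word,
      Filter.Tendsto (deriv fun z => extLin h0 (reg0 (wordS w)) z)
        (Bornology.cobounded ℂ ⊓ Filter.principal D0) (nhds 0) ∧
      Filter.Tendsto (deriv fun z => extLin h1 (reg0 (wordS w)) z)
        (Bornology.cobounded ℂ ⊓ Filter.principal D1) (nhds 0)) ∧
  -- (3) normalization at the origin
  (∀ w : Word, extLin h0 (reg0 (wordS w)) 0 = 0)


/-!
Let `∂ = derivX0` be the linear map with `(∂x)(w) = x(w x0)`, i.e. `w x0 ↦ w` and `w x1 ↦ 0`.
It is a derivation of the shuffle product, its kernel is `S^0`, and `∂ x0^(j+1) = x0^j`.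
Put `r_m = Σ_{j ≤ m} (-1)^j (u x0^(m-j)) ⧢ x0^j`. Since `x0^k ⧢ x0^j = C(k+j, j) x0^(k+j)`,
binomial inversion gives `u x0^n = Σ_j r_(n-j) ⧢ x0^j`; moreover `∂ r_m` telescopes to `0`,
so `r_m ∈ S^0`. Applying `∂` repeatedly shows that a decomposition `Σ_j w_j ⧢ x0^j` with
`w_j ∈ S^0` is unique, hence `reg^0(u x0^n) = r_n`.
-/

def shLin : S →ₗ[ℂ] S →ₗ[ℂ] S :=
  Finsupp.linearCombination ℂ fun u => Finsupp.linearCombination ℂ (shWord u)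

theorem shLin_apply (x y : S) : shLin x y = sh x y := by
  simp only [shLin, sh, Finsupp.linearCombination_apply, Finsupp.sum, LinearMap.sum_apply,
    LinearMap.smul_apply, Finset.smul_sum, mul_smul]

@[simp] theorem sh_add_left (x x' y : S) : sh (x + x') y = sh x y + sh x' y := by
  simp only [← shLin_apply, map_add, LinearMap.add_apply]

@[simp] theorem sh_add_right (x y y' : S) : sh x (y + y') = sh x y + sh x y' := by
  simp only [← shLin_apply, map_add]

@[simp] theorem sh_smul_left (c : ℂ) (x y : S) : sh (c • x) y = c • sh x y := by
  simp only [← shLin_apply, map_smul, LinearMap.smul_apply]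

@[simp] theorem sh_smul_right (c : ℂ) (x y : S) : sh x (c • y) = c • sh x y := by
  simp only [← shLin_apply, map_smul]

@[simp] theorem sh_zero_left (y : S) : sh 0 y = 0 := by
  simp only [← shLin_apply, map_zero, LinearMap.zero_apply]

@[simp] theorem sh_zero_right (x : S) : sh x 0 = 0 := by
  simp only [← shLin_apply, map_zero]

theorem sh_sub_left (x x' y : S) : sh (x - x') y = sh x y - sh x' y := by
  simp only [← shLin_apply, map_sub, LinearMap.sub_apply]

theorem sh_sum_left {ι : Type*} (s : Finset ι) (x : ι → S) (y : S) :
    sh (∑ i ∈ s, x i) y = ∑ i ∈ s, sh (x i) y := by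
  simp only [← shLin_apply, map_sum, LinearMap.sum_apply]

theorem sh_wordS_wordS (u v : Word) : sh (wordS u) (wordS v) = shWord u v := by
  simp [sh, wordS]

theorem single_eq_smul_wordS (w : Word) (c : ℂ) : Finsupp.single w c = c • wordS w := by
  simp [wordS]

theorem shWord_nil_left (v : Word) : shWord [] v = wordS v := by
  cases v <;> simp [shWord, wordS]

theorem shWord_nil_right (u : Word) : shWord u [] = wordS u := by
  cases u <;> simp [shWord, wordS]

theorem sh_wordS_nil_right (x : S) : sh x (wordS []) = x := by
  induction x using Finsupp.induction_linear with
  | zero => simp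
  | add x y hx hy => rw [sh_add_left, hx, hy]
  | single w c => rw [single_eq_smul_wordS, sh_smul_left, sh_wordS_wordS, shWord_nil_right]

theorem sh_wordS_nil_left (y : S) : sh (wordS []) y = y := by
  induction y using Finsupp.induction_linear with
  | zero => simp
  | add x y hx hy => rw [sh_add_right, hx, hy]
  | single w c => rw [single_eq_smul_wordS, sh_smul_right, sh_wordS_wordS, shWord_nil_left]

def prepend (a : Bool) : S →ₗ[ℂ] S := Finsupp.lmapDomain ℂ ℂ (a :: ·)

theorem prepend_wordS (a : Bool) (w : Word) : prepend a (wordS w) = wordS (a :: w) := by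
  simp [prepend, wordS]

theorem prepend_apply_cons (a b : Bool) (x : S) (w : Word) :
    prepend a x (b :: w) = if a = b then x w else 0 := by
  split_ifs with h
  · subst h
    exact Finsupp.mapDomain_apply List.cons_injective x w
  · exact Finsupp.mapDomain_of_notMem_range _ _ (by simpa using h)

theorem prepend_apply_nil (a : Bool) (x : S) : prepend a x [] = 0 :=
  Finsupp.mapDomain_of_notMem_range _ _ (by simp)

theorem shWord_cons_cons (a b : Bool) (u v : Word) :
    shWord (a :: u) (b :: v) = prepend a (shWord u (b :: v)) + prepend b (shWord (a :: u) v) := by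
  rw [shWord]; rfl

theorem sh_prepend_prepend (a b : Bool) (x y : S) :
    sh (prepend a x) (prepend b y) =
      prepend a (sh x (prepend b y)) + prepend b (sh (prepend a x) y) := by
  induction x using Finsupp.induction_linear with
  | zero => simp
  | add x x' hx hx' => simp only [map_add, sh_add_left, hx, hx']; abel
  | single u c =>
    induction y using Finsupp.induction_linear with
    | zero => simp
    | add y y' hy hy' => simp only [map_add, sh_add_right, hy, hy']; abel
    | single v d =>
      simp only [single_eq_smul_wordS, map_smul, sh_smul_left, sh_smul_right, prepend_wordS,
        sh_wordS_wordS, shWord_cons_cons, smul_add]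

theorem sh_assoc_wordS : ∀ u v w : Word,
    sh (sh (wordS u) (wordS v)) (wordS w) = sh (wordS u) (sh (wordS v) (wordS w))
  | [], v, w => by rw [sh_wordS_nil_left, sh_wordS_nil_left]
  | u, [], w => by rw [sh_wordS_nil_right, sh_wordS_nil_left]
  | u, v, [] => by rw [sh_wordS_nil_right, sh_wordS_nil_right]
  | a :: u, b :: v, c :: w => by
    have ih₁ := sh_assoc_wordS u (b :: v) (c :: w)
    have ih₂ := sh_assoc_wordS (a :: u) v (c :: w)
    have ih₃ := sh_assoc_wordS (a :: u) (b :: v) w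
    simp only [← prepend_wordS] at ih₁ ih₂ ih₃ ⊢
    generalize wordS u = U, wordS v = V, wordS w = W at *
    have hAB := sh_prepend_prepend a b U V
    have hBC := sh_prepend_prepend b c V W
    calc sh (sh (prepend a U) (prepend b V)) (prepend c W)
        = prepend a (sh (sh U (prepend b V)) (prepend c W))
          + prepend b (sh (sh (prepend a U) V) (prepend c W))
          + prepend c (sh (sh (prepend a U) (prepend b V)) W) := by
          conv_lhs => rw [hAB, sh_add_left, sh_prepend_prepend, sh_prepend_prepend]
          rw [hAB, sh_add_left, map_add]
          abel
      _ = prepend a (sh U (sh (prepend b V) (prepend c W)))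
          + prepend b (sh (prepend a U) (sh V (prepend c W)))
          + prepend c (sh (prepend a U) (sh (prepend b V) W)) := by rw [ih₁, ih₂, ih₃]
      _ = sh (prepend a U) (sh (prepend b V) (prepend c W)) := by
          conv_rhs => rw [hBC, sh_add_right, sh_prepend_prepend, sh_prepend_prepend]
          rw [hBC, sh_add_right, map_add]
          abel
termination_by u v w => u.length + v.length + w.length

theorem sh_assoc (x y z : S) : sh (sh x y) z = sh x (sh y z) := by
  induction x using Finsupp.induction_linear with
  | zero => simp
  | add x x' hx hx' => simp only [sh_add_left, hx, hx']
  | single u c =>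
    induction y using Finsupp.induction_linear with
    | zero => simp
    | add y y' hy hy' => simp only [sh_add_left, sh_add_right, hy, hy']
    | single v d =>
      induction z using Finsupp.induction_linear with
      | zero => simp
      | add z z' hz hz' => simp only [sh_add_right, hz, hz']
      | single w e =>
        simp only [single_eq_smul_wordS, sh_smul_left, sh_smul_right, sh_assoc_wordS]

@[simp] theorem x0pow_zero : x0pow 0 = [] := rfl

theorem x0pow_succ_eq_concat (k : ℕ) : x0pow (k + 1) = x0pow k ++ [false] :=
  List.replicate_succ' ..

theorem sh_wordS_x0pow_x0pow (i j : ℕ) :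
    sh (wordS (x0pow i)) (wordS (x0pow j)) = ((i + j).choose i : ℂ) • wordS (x0pow (i + j)) := by
  induction i generalizing j with
  | zero => simp [sh_wordS_nil_left]
  | succ i ihi =>
    induction j with
    | zero => simp [sh_wordS_nil_right]
    | succ j ihj =>
      have hx0 : ∀ k, wordS (x0pow (k + 1)) = prepend false (wordS (x0pow k)) := fun k =>
        (prepend_wordS _ _).symm
      rw [hx0 i, hx0 j, sh_prepend_prepend, ← hx0, ← hx0, ihi, ihj,
        show i + (j + 1) = i + j + 1 by omega, show i + 1 + j = i + j + 1 by omega,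
        show i + 1 + (j + 1) = i + j + 1 + 1 by omega, ← map_add, ← add_smul, map_smul, ← hx0,
        Nat.choose_succ_succ' (i + j + 1) i, Nat.cast_add]

def derivX0 : S →ₗ[ℂ] S := Finsupp.lcomapDomain (· ++ [false]) (List.append_left_injective _)

theorem derivX0_apply (x : S) (w : Word) : derivX0 x w = x (w ++ [false]) := rfl

theorem derivX0_wordS_concat_false (w : Word) : derivX0 (wordS (w ++ [false])) = wordS w := by
  ext v
  simp [derivX0_apply, wordS, Finsupp.single_apply]

theorem endsInX1_iff_ne_concat_false (w : Word) : EndsInX1 w ↔ ∀ v, w ≠ v ++ [false] := by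
  rcases w.eq_nil_or_concat with rfl | ⟨v, b, rfl⟩
  · simp [EndsInX1]
  · cases b <;> simp [EndsInX1]

theorem derivX0_eq_zero_iff (x : S) : derivX0 x = 0 ↔ InS0 x := by
  simp only [InS0, endsInX1_iff_ne_concat_false, Finsupp.ext_iff, derivX0_apply, Finsupp.coe_zero,
    Pi.zero_apply, Finsupp.mem_support_iff]
  exact ⟨fun h w hw v hv => hw (hv ▸ h v), fun h v => by_contra fun hv => h _ hv v rfl⟩

theorem derivX0_prepend (a : Bool) (x : S) :
    derivX0 (prepend a x) = prepend a (derivX0 x) + (if a then 0 else x []) • wordS [] := by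
  ext (_ | ⟨b, w⟩)
  · cases a <;> simp [derivX0_apply, prepend_apply_cons, prepend_apply_nil, wordS]
  · cases a <;> simp [derivX0_apply, prepend_apply_cons, wordS]

theorem shWord_apply_nil {u v : Word} (h : u ≠ [] ∨ v ≠ []) : shWord u v [] = 0 := by
  rcases u with _ | ⟨a, u⟩ <;> rcases v with _ | ⟨b, v⟩
  · simp at h
  all_goals simp [shWord_nil_left, shWord_nil_right, shWord_cons_cons, prepend_apply_nil, wordS]

theorem derivX0_wordS_of_endsInX1 {w : Word} (hw : EndsInX1 w) : derivX0 (wordS w) = 0 := by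
  ext v
  simp [derivX0_apply, wordS, (endsInX1_iff_ne_concat_false w).1 hw v]

theorem derivX0_wordS_nil : derivX0 (wordS []) = 0 :=
  derivX0_wordS_of_endsInX1 (.inl rfl)

theorem derivX0_sh_wordS : ∀ u v : Word,
    derivX0 (sh (wordS u) (wordS v)) =
      sh (derivX0 (wordS u)) (wordS v) + sh (wordS u) (derivX0 (wordS v))
  | [], v => by
    rw [sh_wordS_nil_left, sh_wordS_nil_left, derivX0_wordS_nil, sh_zero_left, zero_add]
  | u, [] => by
    rw [sh_wordS_nil_right, sh_wordS_nil_right, derivX0_wordS_nil, sh_zero_right,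
      add_zero]
  | a :: u, b :: v => by
    have ih₁ := derivX0_sh_wordS u (b :: v)
    have ih₂ := derivX0_sh_wordS (a :: u) v
    have hnil₁ : sh (wordS u) (wordS (b :: v)) [] = 0 := by
      rw [sh_wordS_wordS, shWord_apply_nil (.inr (List.cons_ne_nil _ _))]
    have hnil₂ : sh (wordS (a :: u)) (wordS v) [] = 0 := by
      rw [sh_wordS_wordS, shWord_apply_nil (.inl (List.cons_ne_nil _ _))]
    rw [sh_wordS_wordS (a :: u), shWord_cons_cons, ← sh_wordS_wordS, ← sh_wordS_wordS, map_add,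
      derivX0_prepend, derivX0_prepend, hnil₁, hnil₂, ih₁, ih₂]
    cases a <;> cases b <;>
      simp only [← prepend_wordS, derivX0_prepend, sh_add_left, sh_add_right, sh_smul_left,
        sh_smul_right, sh_prepend_prepend, sh_wordS_nil_left, sh_wordS_nil_right, map_add,
        map_smul, Bool.false_eq_true, ↓reduceIte, zero_smul, add_zero] <;>
      abel
termination_by u v => u.length + v.length

theorem derivX0_sh (x y : S) : derivX0 (sh x y) = sh (derivX0 x) y + sh x (derivX0 y) := by
  induction x using Finsupp.induction_linear with
  | zero => simp
  | add x x' hx hx' => simp only [sh_add_left, map_add, hx, hx']; abel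
  | single u c =>
    induction y using Finsupp.induction_linear with
    | zero => simp
    | add y y' hy hy' => simp only [sh_add_right, map_add, hy, hy']; abel
    | single v d =>
      simp only [single_eq_smul_wordS, sh_smul_left, sh_smul_right, map_smul, derivX0_sh_wordS,
        smul_add]

theorem derivX0_wordS_x0pow_succ (k : ℕ) : derivX0 (wordS (x0pow (k + 1))) = wordS (x0pow k) := by
  rw [x0pow_succ_eq_concat, derivX0_wordS_concat_false]

def reg0Sum (a : ℕ → S) (m : ℕ) : S :=
  ∑ j ∈ Finset.range (m + 1), ((-1 : ℂ) ^ j) • sh (a (m - j)) (wordS (x0pow j))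

theorem sum_sh_reg0Sum (a : ℕ → S) (n : ℕ) :
    ∑ j ∈ Finset.range (n + 1), sh (reg0Sum a (n - j)) (wordS (x0pow j)) = a n := by
  let f : ℕ → ℕ → S := fun j k =>
    ((-1 : ℂ) ^ k * ((k + j).choose j : ℂ)) • sh (a (n - j - k)) (wordS (x0pow (k + j)))
  have hexpand : ∀ j ∈ Finset.range (n + 1),
      sh (reg0Sum a (n - j)) (wordS (x0pow j)) = ∑ k ∈ Finset.range (n + 1 - j), f j k := by
    intro j hj
    rw [reg0Sum, sh_sum_left, show n - j + 1 = n + 1 - j by grind]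
    refine Finset.sum_congr rfl fun k _ => ?_
    rw [sh_smul_left, sh_assoc, sh_wordS_x0pow_x0pow, sh_smul_right, smul_smul,
      Nat.choose_symm_add]
  have hcollect : ∀ m ∈ Finset.range (n + 1),
      ∑ k ∈ Finset.range (m + 1), f k (m - k) =
        (0 : ℂ) ^ m • sh (a (n - m)) (wordS (x0pow m)) := by
    intro m hm
    calc ∑ k ∈ Finset.range (m + 1), f k (m - k)
        = ∑ k ∈ Finset.range (m + 1), ((1 : ℂ) ^ k * (-1) ^ (m - k) * (m.choose k : ℂ)) •
            sh (a (n - m)) (wordS (x0pow m)) := by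
          refine Finset.sum_congr rfl fun k hk => ?_
          have hkm := Finset.mem_range_succ_iff.1 hk
          simp only [f, show m - k + k = m by omega, show n - k - (m - k) = n - m by omega,
            one_pow, one_mul]
      _ = (0 : ℂ) ^ m • sh (a (n - m)) (wordS (x0pow m)) := by
          rw [← Finset.sum_smul, ← add_pow, add_neg_cancel]
  rw [Finset.sum_congr rfl hexpand, ← Finset.sum_range_diag_flip, Finset.sum_congr rfl hcollect,
    Finset.sum_range_succ']
  simp [sh_wordS_nil_right]

theorem derivX0_reg0Sum {a : ℕ → S} (h₀ : derivX0 (a 0) = 0)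
    (hsucc : ∀ p, derivX0 (a (p + 1)) = a p) (m : ℕ) : derivX0 (reg0Sum a m) = 0 := by
  cases m with
  | zero => simp [reg0Sum, sh_wordS_nil_right, h₀]
  | succ m =>
    have hleft : ∑ j ∈ Finset.range (m + 1 + 1),
        ((-1 : ℂ) ^ j) • sh (derivX0 (a (m + 1 - j))) (wordS (x0pow j)) = reg0Sum a m := by
      rw [Finset.sum_range_succ, Nat.sub_self, h₀, sh_zero_left, smul_zero, add_zero]
      refine Finset.sum_congr rfl fun j hj => ?_
      rw [show m + 1 - j = m - j + 1 by grind, hsucc]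
    have hright : ∑ j ∈ Finset.range (m + 1 + 1),
        ((-1 : ℂ) ^ j) • sh (a (m + 1 - j)) (derivX0 (wordS (x0pow j))) = -reg0Sum a m := by
      rw [Finset.sum_range_succ', x0pow_zero, derivX0_wordS_nil, sh_zero_right, smul_zero,
        add_zero, reg0Sum, ← Finset.sum_neg_distrib]
      refine Finset.sum_congr rfl fun j _ => ?_
      rw [derivX0_wordS_x0pow_succ, Nat.add_sub_add_right, pow_succ, mul_neg_one, neg_smul]
    simp only [reg0Sum, map_sum, map_smul, derivX0_sh, smul_add, Finset.sum_add_distrib, hleft,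
      hright, add_neg_cancel]

theorem decomp0Sum_eq_sum_range {f : ℕ →₀ S} {N : ℕ} (hf : f.support ⊆ Finset.range N) :
    decomp0Sum f = ∑ j ∈ Finset.range N, sh (f j) (wordS (x0pow j)) :=
  Finsupp.sum_of_support_subset f hf _ fun _ _ => sh_zero_left _

theorem eq_zero_of_sum_sh_x0pow_eq_zero {g : ℕ → S} (hg : ∀ j, derivX0 (g j) = 0) {N : ℕ}
    (h : ∑ j ∈ Finset.range N, sh (g j) (wordS (x0pow j)) = 0) : ∀ j < N, g j = 0 := by
  induction N generalizing g with
  | zero => intro j hj; omega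
  | succ N ih =>
    have hD := congrArg derivX0 h
    simp only [map_sum, derivX0_sh, hg, sh_zero_left, zero_add, map_zero] at hD
    rw [Finset.sum_range_succ', x0pow_zero, derivX0_wordS_nil, sh_zero_right, add_zero] at hD
    simp only [derivX0_wordS_x0pow_succ] at hD
    have htail := ih (fun j => hg (j + 1)) hD
    rw [Finset.sum_range_succ', Finset.sum_eq_zero fun j hj => by
      rw [htail j (Finset.mem_range.1 hj), sh_zero_left], zero_add, x0pow_zero,
      sh_wordS_nil_right] at h
    rintro (_ | j) hj
    · exact h
    · exact htail j (by omega)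

theorem HasDecomp0.unique {x : S} {f g : ℕ →₀ S} (hf : HasDecomp0 x f) (hg : HasDecomp0 x g) :
    f = g := by
  obtain ⟨N, hN⟩ := Finset.exists_nat_subset_range (f.support ∪ g.support)
  have hsum : ∑ j ∈ Finset.range N, sh (f j - g j) (wordS (x0pow j)) = 0 := by
    simp only [sh_sub_left, Finset.sum_sub_distrib,
      ← decomp0Sum_eq_sum_range (Finset.union_subset_left hN),
      ← decomp0Sum_eq_sum_range (Finset.union_subset_right hN), ← hf.2, ← hg.2, sub_self]
  have hD : ∀ j, derivX0 (f j - g j) = 0 := fun j => by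
    rw [map_sub, (derivX0_eq_zero_iff _).2 (hf.1 j), (derivX0_eq_zero_iff _).2 (hg.1 j), sub_self]
  ext1 j
  by_cases hj : j < N
  · exact sub_eq_zero.1 (eq_zero_of_sum_sh_x0pow_eq_zero hD hsum j hj)
  · have hj' : j ∉ f.support ∪ g.support := fun h => hj (Finset.mem_range.1 (hN h))
    simp only [Finset.mem_union, Finsupp.mem_support_iff, not_or, not_not] at hj'
    rw [hj'.1, hj'.2]

theorem reg0_eq_of_hasDecomp0 {x : S} {f : ℕ →₀ S} (hf : HasDecomp0 x f) : reg0 x = f 0 := by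
  have hex : ∃ g, HasDecomp0 x g := ⟨f, hf⟩
  rw [reg0, dif_pos hex, hex.choose_spec.unique hf]

theorem hasDecomp0_sum_range {g : ℕ → S} (hg : ∀ j, InS0 (g j)) (N : ℕ) :
    HasDecomp0 (∑ j ∈ Finset.range N, sh (g j) (wordS (x0pow j)))
      (Finsupp.indicator (Finset.range N) fun j _ => g j) := by
  refine ⟨fun j => ?_, ?_⟩
  · rw [Finsupp.indicator_apply]
    split_ifs
    · exact hg j
    · simp [InS0]
  · rw [decomp0Sum_eq_sum_range (Finsupp.support_indicator_subset _ _)]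
    refine Finset.sum_congr rfl fun j hj => ?_
    rw [Finsupp.indicator_apply, dif_pos hj]

theorem reg0_sum_sh_x0pow {g : ℕ → S} (hg : ∀ j, InS0 (g j)) (N : ℕ) :
    reg0 (∑ j ∈ Finset.range (N + 1), sh (g j) (wordS (x0pow j))) = g 0 := by
  rw [reg0_eq_of_hasDecomp0 (hasDecomp0_sum_range hg (N + 1)), Finsupp.indicator_apply,
    dif_pos (by simp)]

/-- For a word `u ∈ S^0` and `n ≥ 0`:
`u x0^n = Σ_{j=0}^n reg^0(u x0^{n-j}) ⧢ x0^j` and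
`reg^0(u x0^n) = Σ_{j=0}^n (-1)^j (u x0^{n-j}) ⧢ x0^j`. -/
theorem reg0_calc (u : Word) (hu : EndsInX1 u) (n : ℕ) :
    wordS (u ++ x0pow n) =
        ∑ j ∈ Finset.range (n + 1),
          sh (reg0 (wordS (u ++ x0pow (n - j)))) (wordS (x0pow j)) ∧
    reg0 (wordS (u ++ x0pow n)) =
        ∑ j ∈ Finset.range (n + 1),
          ((-1 : ℂ) ^ j) • sh (wordS (u ++ x0pow (n - j))) (wordS (x0pow j)) := by
  set a : ℕ → S := fun p => wordS (u ++ x0pow p)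
  have hinS0 (m : ℕ) : InS0 (reg0Sum a m) := by
    refine (derivX0_eq_zero_iff _).1 (derivX0_reg0Sum ?_ (fun p => ?_) m)
    · simpa [a] using derivX0_wordS_of_endsInX1 hu
    · simp only [a, x0pow_succ_eq_concat, ← List.append_assoc, derivX0_wordS_concat_false]
  have hreg (m : ℕ) : reg0 (a m) = reg0Sum a m := by
    conv_lhs => rw [← sum_sh_reg0Sum a m]
    exact reg0_sum_sh_x0pow (fun j => hinS0 _) m
  refine ⟨(sum_sh_reg0Sum a n).symm.trans (Finset.sum_congr rfl fun j _ => ?_), hreg n⟩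
  rw [hreg]

end

end MZVRH
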